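/- Let d ≥ 1, β ∈ (0, d], and α > (d−β)/2. There is a constant C = C(d, α, β) > 0 such that for every finite signed Borel measure μ on ℝ^d with ‖μ‖_B := sup_{t>0} t^{(d−β)/2} ‖p_t ∗ μ‖_{L^∞} < ∞ and every R > 0, ∫_{{|ξ| ≥ R}} |ξ|^{−2α} |μ̂(ξ)|² dξ ≤ C R^{d−β−2α} ‖μ‖ ‖μ‖_B. -/

import Mathlib

/-!
The Fourier transform of `p_s` is `e^{-4π²s|ξ|²}`, so Plancherel turns the Gaussian-weighted
energy of `μ̂` into a pairing with the heat extension: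
`∫ e^{-4π²s|ξ|²} |μ̂(ξ)|² dξ = ∫ (p_s ∗ μ) dμ ≤ ‖p_s ∗ μ‖_∞ ‖μ‖ ≤ s^{-(d-β)/2} ‖μ‖_B ‖μ‖`.
On the annulus `r ≤ |ξ| < 2r` take `s = r⁻²`: there the Gaussian weight is at least `e^{-16π²}`
and `|ξ|^{-2α} ≤ r^{-2α}`, so the annulus contributes at most `e^{16π²} r^{d-β-2α} ‖μ‖ ‖μ‖_B`.
Since `d - β - 2α < 0`, the contributions of the annuli with `r = 2^j R` form a geometric series.
-/

open MeasureTheory Real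
open scoped ENNReal

noncomputable section

/-- Euclidean space `ℝ^d`. -/
abbrev Ed (d : ℕ) := EuclideanSpace ℝ (Fin d)

/-- The heat kernel `p_t(x) = (4πt)^{-d/2} exp(-|x|²/(4t))`. -/
def heatKernel (d : ℕ) (t : ℝ) (x : Ed d) : ℝ :=
  (4 * π * t) ^ (-(d : ℝ) / 2) * Real.exp (-‖x‖ ^ 2 / (4 * t))

/-- Integral of a real function against a finite signed measure. -/
def smIntegral {d : ℕ} (ν : MeasureTheory.SignedMeasure (Ed d)) (f : Ed d → ℝ) : ℝ :=
  (∫ x, f x ∂ν.toJordanDecomposition.posPart) - ∫ x, f x ∂ν.toJordanDecomposition.negPart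

/-- Heat-kernel convolution `(p_t ∗ ν)(x)` of a finite signed measure. -/
def heatConv (d : ℕ) (t : ℝ) (ν : MeasureTheory.SignedMeasure (Ed d)) (x : Ed d) : ℝ :=
  smIntegral ν (fun y => heatKernel d t (x - y))

/-- The Fourier transform `ν̂(ξ) = ∫ exp(-2πi x·ξ) dν(x)` of a finite signed measure. -/
def fourierSM (d : ℕ) (ν : MeasureTheory.SignedMeasure (Ed d)) (ξ : Ed d) : ℂ :=
  (∫ x, Complex.exp (-(2 * π * Complex.I) * ((inner ℝ x ξ : ℝ) : ℂ)) ∂ν.toJordanDecomposition.posPart)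
  - ∫ x, Complex.exp (-(2 * π * Complex.I) * ((inner ℝ x ξ : ℝ) : ℂ)) ∂ν.toJordanDecomposition.negPart

/-- The Besov `Ḃ^{β-d}_{∞,∞}` norm `sup_{t>0} t^{(d-β)/2} ‖p_t ∗ ν‖_∞`. -/
def besovNorm (d : ℕ) (β : ℝ) (ν : MeasureTheory.SignedMeasure (Ed d)) : ℝ≥0∞ :=
  ⨆ t : {t : ℝ // 0 < t},
    ENNReal.ofReal (t.1 ^ (((d : ℝ) - β) / 2)) * eLpNorm (heatConv d t.1 ν) ⊤ volume

/-- The weak `L^p` quasinorm `sup_{λ>0} λ |{|g| > λ}|^{1/p}`. -/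
def weakNorm (d : ℕ) (p : ℝ) (g : Ed d → ℂ) : ℝ≥0∞ :=
  ⨆ l : {l : ℝ // 0 < l},
    ENNReal.ofReal l.1 * (volume {ξ : Ed d | l.1 < ‖g ξ‖}) ^ (1 / p)

/-- Total variation of a signed measure, as a real number. -/
def tv {d : ℕ} (ν : MeasureTheory.SignedMeasure (Ed d)) : ℝ :=
  (ν.totalVariation Set.univ).toReal

open Filter ComplexConjugate

theorem Continuous.enorm_le_eLpNorm_top {X E : Type*} [TopologicalSpace X] [MeasurableSpace X]
    {μ : Measure X} [μ.IsOpenPosMeasure] [NormedAddCommGroup E] {f : X → E}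
    (hf : Continuous f) (x : X) : ‖f x‖ₑ ≤ eLpNorm f ⊤ μ := by
  have hclosed : IsClosed {x | ‖f x‖ₑ ≤ eLpNormEssSup f μ} :=
    isClosed_le hf.enorm continuous_const
  have hx : x ∈ closure {x | ‖f x‖ₑ ≤ eLpNormEssSup f μ} := by
    rw [(Measure.dense_of_ae ae_le_eLpNormEssSup).closure_eq]
    trivial
  rw [eLpNorm_exponent_top]
  exact hclosed.closure_subset hx

theorem continuous_integral_of_norm_le {X Y E : Type*} [TopologicalSpace X]
    [FirstCountableTopology X] [TopologicalSpace Y] [MeasurableSpace Y] [OpensMeasurableSpace Y]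
    [NormedAddCommGroup E] [NormedSpace ℝ E] [SecondCountableTopologyEither Y E] {μ : Measure Y} [IsFiniteMeasure μ]
    {K : X → Y → E} {C : ℝ} (hK : Continuous (Function.uncurry K)) (hC : ∀ x y, ‖K x y‖ ≤ C) :
    Continuous fun x => ∫ y, K x y ∂μ :=
  continuous_of_dominated
    (fun x => (hK.comp (Continuous.prodMk_right x)).aestronglyMeasurable)
    (fun x => Eventually.of_forall (hC x)) (integrable_const C)
    (Eventually.of_forall fun y => hK.comp (Continuous.prodMk_left y))

theorem integrable_exp_neg_mul_sq_norm {V : Type*} [NormedAddCommGroup V] [InnerProductSpace ℝ V]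
    [FiniteDimensional ℝ V] [MeasurableSpace V] [BorelSpace V] {b : ℝ} (hb : 0 < b) :
    Integrable fun v : V => rexp (-b * ‖v‖ ^ 2) := by
  have := (GaussianFourier.integrable_cexp_neg_mul_sq_norm_add
    (V := V) (b := (b : ℂ)) (by simpa using hb) 0 0).norm
  refine this.congr (Eventually.of_forall fun v => ?_)
  simp only [inner_zero_left, Complex.ofReal_zero, mul_zero, add_zero, Complex.norm_exp]
  norm_cast

section SignedMeasure

variable {d : ℕ} (ν : SignedMeasure (Ed d))

theorem tv_eq_real_add_real :
    tv ν = ν.toJordanDecomposition.posPart.real Set.univ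
      + ν.toJordanDecomposition.negPart.real Set.univ :=
  ENNReal.toReal_add (measure_ne_top _ _) (measure_ne_top _ _)

theorem abs_smIntegral_le {f : Ed d → ℝ} {M : ℝ} (hf : ∀ x, |f x| ≤ M) :
    |smIntegral ν f| ≤ M * tv ν := by
  simp only [← Real.norm_eq_abs] at hf ⊢
  rw [tv_eq_real_add_real, mul_add]
  exact (norm_sub_le _ _).trans (add_le_add
    (norm_integral_le_of_norm_le_const (Eventually.of_forall hf))
    (norm_integral_le_of_norm_le_const (Eventually.of_forall hf)))

end SignedMeasure

def fourierKernel {d : ℕ} (x ξ : Ed d) : ℂ :=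
  Complex.exp (-(2 * π * Complex.I) * ((inner ℝ x ξ : ℝ) : ℂ))

def heatSymbol {d : ℕ} (s : ℝ) (ξ : Ed d) : ℝ := rexp (-(4 * π ^ 2 * s) * ‖ξ‖ ^ 2)

section Kernels

variable {d : ℕ} {s : ℝ}

theorem norm_fourierKernel (x ξ : Ed d) : ‖fourierKernel x ξ‖ = 1 := by
  simp [fourierKernel, Complex.norm_exp, Complex.mul_re]

theorem continuous_fourierKernel :
    Continuous fun p : Ed d × Ed d => fourierKernel p.1 p.2 := by
  unfold fourierKernel; fun_prop

theorem continuous_integral_fourierKernel (μ : Measure (Ed d)) [IsFiniteMeasure μ] :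
    Continuous fun ξ => ∫ x, fourierKernel x ξ ∂μ :=
  continuous_integral_of_norm_le (continuous_fourierKernel.comp continuous_swap)
    fun ξ x => (norm_fourierKernel x ξ).le

theorem norm_integral_fourierKernel_le (μ : Measure (Ed d)) [IsFiniteMeasure μ] (ξ : Ed d) :
    ‖∫ x, fourierKernel x ξ ∂μ‖ ≤ μ.real Set.univ := by
  simpa using norm_integral_le_of_norm_le_const
    (μ := μ) (Eventually.of_forall fun x => (norm_fourierKernel x ξ).le)

theorem continuous_fourierSM (ν : SignedMeasure (Ed d)) : Continuous (fourierSM d ν) :=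
  (continuous_integral_fourierKernel _).sub (continuous_integral_fourierKernel _)

theorem norm_fourierSM_le (ν : SignedMeasure (Ed d)) (ξ : Ed d) : ‖fourierSM d ν ξ‖ ≤ tv ν := by
  rw [tv_eq_real_add_real]
  exact (norm_sub_le _ _).trans
    (add_le_add (norm_integral_fourierKernel_le _ ξ) (norm_integral_fourierKernel_le _ ξ))

theorem continuous_heatKernel : Continuous (heatKernel d s) := by
  unfold heatKernel; fun_prop

theorem norm_heatKernel_le (hs : 0 < s) (x : Ed d) :
    ‖heatKernel d s x‖ ≤ (4 * π * s) ^ (-(d : ℝ) / 2) := by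
  rw [Real.norm_of_nonneg (by unfold heatKernel; positivity)]
  refine mul_le_of_le_one_right (by positivity) (exp_le_one_iff.mpr ?_)
  rw [neg_div]
  exact neg_nonpos.mpr (by positivity)

theorem continuous_integral_heatKernel_sub (hs : 0 < s) (μ : Measure (Ed d)) [IsFiniteMeasure μ] :
    Continuous fun x => ∫ y, heatKernel d s (x - y) ∂μ :=
  continuous_integral_of_norm_le (continuous_heatKernel.comp continuous_sub)
    fun x y => norm_heatKernel_le hs (x - y)

theorem continuous_heatConv (hs : 0 < s) (ν : SignedMeasure (Ed d)) :
    Continuous (heatConv d s ν) :=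
  (continuous_integral_heatKernel_sub hs _).sub (continuous_integral_heatKernel_sub hs _)

theorem heatSymbol_pos (s : ℝ) (ξ : Ed d) : 0 < heatSymbol s ξ := exp_pos _

theorem continuous_heatSymbol : Continuous (heatSymbol (d := d) s) := by
  unfold heatSymbol; fun_prop

theorem integrable_heatSymbol (hs : 0 < s) : Integrable (heatSymbol (d := d) s) :=
  integrable_exp_neg_mul_sq_norm (by positivity)

theorem heatSymbol_mul_fourierKernel_mul_conj (x y ξ : Ed d) :
    (heatSymbol s ξ : ℂ) * (fourierKernel x ξ * conj (fourierKernel y ξ))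
      = Complex.exp (-(4 * π ^ 2 * s : ℝ) * ‖ξ‖ ^ 2
          + -(2 * π * Complex.I) * ((inner ℝ (x - y) ξ : ℝ) : ℂ)) := by
  simp only [heatSymbol, fourierKernel, ← Complex.exp_conj, Complex.ofReal_exp, ← Complex.exp_add,
    map_mul, map_neg, map_ofNat, Complex.conj_I, Complex.conj_ofReal, inner_sub_left]
  push_cast
  ring_nf

theorem integral_heatSymbol_mul_fourierKernel_mul_conj (hs : 0 < s) (x y : Ed d) :
    ∫ ξ, (heatSymbol s ξ : ℂ) * (fourierKernel x ξ * conj (fourierKernel y ξ))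
      = heatKernel d s (x - y) := by
  have hb : 0 < ((4 * π ^ 2 * s : ℝ) : ℂ).re := by simp only [Complex.ofReal_re]; positivity
  simp_rw [heatSymbol_mul_fourierKernel_mul_conj,
    GaussianFourier.integral_cexp_neg_mul_sq_norm_add hb, finrank_euclideanSpace_fin]
  have hbase : (π : ℂ) / ((4 * π ^ 2 * s : ℝ) : ℂ) = (((4 * π * s) ⁻¹ : ℝ) : ℂ) := by
    push_cast
    field_simp
  have hexp : (-(2 * π * Complex.I)) ^ 2 * (‖x - y‖ : ℂ) ^ 2 / (4 * ((4 * π ^ 2 * s : ℝ) : ℂ))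
      = ((-‖x - y‖ ^ 2 / (4 * s) : ℝ) : ℂ) := by
    push_cast
    field_simp
    ring_nf
    rw [Complex.I_sq]
    ring
  rw [hbase, hexp, heatKernel, neg_div (2 : ℝ) (d : ℝ), Real.rpow_neg (by positivity),
    ← Real.inv_rpow (by positivity), Complex.ofReal_mul, Complex.ofReal_exp,
    Complex.ofReal_cpow (by positivity)]
  push_cast
  rfl

end Kernels

section Energy

variable {d : ℕ} {s : ℝ}

theorem integrable_heatSymbol_mul_mul_conj (hs : 0 < s) {F G : Ed d → ℂ} {C D : ℝ}
    (hF : Continuous F) (hG : Continuous G) (hFC : ∀ ξ, ‖F ξ‖ ≤ C) (hGD : ∀ ξ, ‖G ξ‖ ≤ D) :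
    Integrable fun ξ => (heatSymbol s ξ : ℂ) * (F ξ * conj (G ξ)) :=
  (integrable_heatSymbol hs).ofReal.mul_bdd
    (hF.mul (Complex.continuous_conj.comp hG)).aestronglyMeasurable
    (Eventually.of_forall fun ξ => by
      rw [norm_mul, RCLike.norm_conj]
      exact mul_le_mul (hFC ξ) (hGD ξ) (norm_nonneg _) ((norm_nonneg _).trans (hFC ξ)))

theorem integrable_integral_heatKernel_sub (hs : 0 < s) (μ μ' : Measure (Ed d))
    [IsFiniteMeasure μ] [IsFiniteMeasure μ'] :
    Integrable (fun x => ∫ y, heatKernel d s (x - y) ∂μ') μ :=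
  .of_bound (continuous_integral_heatKernel_sub hs μ').aestronglyMeasurable _
    (Eventually.of_forall fun _ =>
      norm_integral_le_of_norm_le_const (Eventually.of_forall fun _ => norm_heatKernel_le hs _))

theorem integral_heatSymbol_mul_fourier_mul_conj_fourier (hs : 0 < s) (μ μ' : Measure (Ed d))
    [IsFiniteMeasure μ] [IsFiniteMeasure μ'] :
    ∫ ξ, (heatSymbol s ξ : ℂ) *
        ((∫ x, fourierKernel x ξ ∂μ) * conj (∫ y, fourierKernel y ξ ∂μ'))
      = ((∫ x, ∫ y, heatKernel d s (x - y) ∂μ' ∂μ : ℝ) : ℂ) := by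
  set f : Ed d → Ed d × Ed d → ℂ :=
    fun ξ z => (heatSymbol s ξ : ℂ) * (fourierKernel z.1 ξ * conj (fourierKernel z.2 ξ))
  have hf : Integrable (Function.uncurry f) (volume.prod (μ.prod μ')) := by
    have hg : Integrable (fun p : Ed d × (Ed d × Ed d) => heatSymbol s p.1)
        (volume.prod (μ.prod μ')) := by
      simpa using (integrable_heatSymbol hs).mul_prod (integrable_const (1 : ℝ) (μ := μ.prod μ'))
    refine hg.mono' ?_ (Eventually.of_forall fun p => ?_)
    · have hK (i : Ed d × Ed d → Ed d) (hi : Continuous i) :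
          Continuous fun p : Ed d × (Ed d × Ed d) => fourierKernel (i p.2) p.1 :=
        continuous_fourierKernel.comp ((hi.comp continuous_snd).prodMk continuous_fst)
      exact ((Complex.continuous_ofReal.comp (continuous_heatSymbol.comp continuous_fst)).mul
        ((hK _ continuous_fst).mul (Complex.continuous_conj.comp (hK _ continuous_snd)))
        ).aestronglyMeasurable
    · change ‖f p.1 p.2‖ ≤ _
      rw [norm_mul, norm_mul, RCLike.norm_conj, norm_fourierKernel, norm_fourierKernel,
        Complex.norm_real, Real.norm_of_nonneg (heatSymbol_pos s p.1).le, mul_one, mul_one]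
  have hp : Integrable (fun z : Ed d × Ed d => heatKernel d s (z.1 - z.2)) (μ.prod μ') :=
    .of_bound (continuous_heatKernel.comp continuous_sub).aestronglyMeasurable _
      (Eventually.of_forall fun _ => norm_heatKernel_le hs _)
  calc _ = ∫ ξ, ∫ z, f ξ z ∂(μ.prod μ') := by
        congr 1; funext ξ
        rw [← integral_conj, ← integral_prod_mul, ← integral_const_mul]
    _ = ∫ z, (∫ ξ, f ξ z) ∂(μ.prod μ') := integral_integral_swap hf
    _ = ∫ z, (heatKernel d s (z.1 - z.2) : ℂ) ∂(μ.prod μ') := by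
        congr 1; funext z
        exact integral_heatSymbol_mul_fourierKernel_mul_conj hs z.1 z.2
    _ = _ := by rw [integral_complex_ofReal, integral_prod _ hp]

theorem integral_heatSymbol_mul_fourier_mul_conj_fourierSM (hs : 0 < s) (μ : Measure (Ed d))
    [IsFiniteMeasure μ] (ν : SignedMeasure (Ed d)) :
    ∫ ξ, (heatSymbol s ξ : ℂ) * ((∫ x, fourierKernel x ξ ∂μ) * conj (fourierSM d ν ξ))
      = ((∫ x, heatConv d s ν x ∂μ : ℝ) : ℂ) := by
  set μp := ν.toJordanDecomposition.posPart
  set μn := ν.toJordanDecomposition.negPart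
  have hint (μ' : Measure (Ed d)) [IsFiniteMeasure μ'] :=
    integrable_heatSymbol_mul_mul_conj hs (continuous_integral_fourierKernel μ)
      (continuous_integral_fourierKernel μ') (norm_integral_fourierKernel_le μ)
      (norm_integral_fourierKernel_le μ')
  calc _ = ∫ ξ, ((heatSymbol s ξ : ℂ) *
          ((∫ x, fourierKernel x ξ ∂μ) * conj (∫ y, fourierKernel y ξ ∂μp))
        - (heatSymbol s ξ : ℂ) *
          ((∫ x, fourierKernel x ξ ∂μ) * conj (∫ y, fourierKernel y ξ ∂μn))) := by
        congr 1; funext ξ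
        rw [show fourierSM d ν ξ = (∫ x, fourierKernel x ξ ∂μp) - ∫ x, fourierKernel x ξ ∂μn
          from rfl, map_sub]
        ring
    _ = _ := by
        rw [integral_sub (hint μp) (hint μn), integral_heatSymbol_mul_fourier_mul_conj_fourier hs,
          integral_heatSymbol_mul_fourier_mul_conj_fourier hs, ← Complex.ofReal_sub,
          ← integral_sub (integrable_integral_heatKernel_sub hs μ μp)
            (integrable_integral_heatKernel_sub hs μ μn)]
        rfl

theorem integral_heatSymbol_mul_norm_fourierSM_sq (hs : 0 < s) (ν : SignedMeasure (Ed d)) :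
    ∫ ξ, heatSymbol s ξ * ‖fourierSM d ν ξ‖ ^ 2 = smIntegral ν (heatConv d s ν) := by
  set μp := ν.toJordanDecomposition.posPart
  set μn := ν.toJordanDecomposition.negPart
  have hint (μ : Measure (Ed d)) [IsFiniteMeasure μ] :=
    integrable_heatSymbol_mul_mul_conj hs (continuous_integral_fourierKernel μ)
      (continuous_fourierSM ν) (norm_integral_fourierKernel_le μ) (norm_fourierSM_le ν)
  apply Complex.ofReal_injective
  calc _ = ∫ ξ, ((heatSymbol s ξ : ℂ) * ((∫ x, fourierKernel x ξ ∂μp) * conj (fourierSM d ν ξ))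
        - (heatSymbol s ξ : ℂ) * ((∫ x, fourierKernel x ξ ∂μn) * conj (fourierSM d ν ξ))) := by
        rw [← integral_complex_ofReal]
        congr 1; funext ξ
        rw [← mul_sub, ← sub_mul, Complex.ofReal_mul, Complex.ofReal_pow, ← Complex.mul_conj']
        rfl
    _ = _ := by
        rw [integral_sub (hint μp) (hint μn), integral_heatSymbol_mul_fourier_mul_conj_fourierSM hs,
          integral_heatSymbol_mul_fourier_mul_conj_fourierSM hs, ← Complex.ofReal_sub]
        rfl

end Energy

section Besov

variable {d : ℕ} {β s : ℝ} {ν : SignedMeasure (Ed d)}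

theorem eLpNorm_heatConv_le_besovNorm (hs : 0 < s) :
    eLpNorm (heatConv d s ν) ⊤ volume
      ≤ ENNReal.ofReal (s ^ (-(((d : ℝ) - β) / 2))) * besovNorm d β ν := by
  have hle : ENNReal.ofReal (s ^ (((d : ℝ) - β) / 2)) * eLpNorm (heatConv d s ν) ⊤ volume
      ≤ besovNorm d β ν :=
    le_iSup (fun t : {t : ℝ // 0 < t} =>
      ENNReal.ofReal (t.1 ^ (((d : ℝ) - β) / 2)) * eLpNorm (heatConv d t.1 ν) ⊤ volume) ⟨s, hs⟩
  rw [Real.rpow_neg hs.le, ENNReal.ofReal_inv_of_pos (by positivity), ← ENNReal.div_eq_inv_mul,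
    ENNReal.le_div_iff_mul_le (.inl (by positivity)) (.inl ENNReal.ofReal_ne_top), mul_comm]
  exact hle

theorem lintegral_heatSymbol_mul_norm_fourierSM_sq_le (hB : besovNorm d β ν ≠ ⊤) (hs : 0 < s) :
    ∫⁻ ξ, ENNReal.ofReal (heatSymbol s ξ * ‖fourierSM d ν ξ‖ ^ 2)
      ≤ ENNReal.ofReal (s ^ (-(((d : ℝ) - β) / 2))) * ν.totalVariation Set.univ
          * besovNorm d β ν := by
  have hL := eLpNorm_heatConv_le_besovNorm (β := β) (ν := ν) hs
  have hfin : eLpNorm (heatConv d s ν) ⊤ volume ≠ ⊤ :=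
    ne_top_of_le_ne_top (ENNReal.mul_ne_top ENNReal.ofReal_ne_top hB) hL
  have hM (x : Ed d) : |heatConv d s ν x| ≤ (eLpNorm (heatConv d s ν) ⊤ volume).toReal := by
    rw [← ENNReal.ofReal_le_iff_le_toReal hfin, ← Real.enorm_eq_ofReal_abs]
    exact (continuous_heatConv hs ν).enorm_le_eLpNorm_top x
  have hint : Integrable fun ξ => heatSymbol s ξ * ‖fourierSM d ν ξ‖ ^ 2 :=
    (integrable_heatSymbol hs).mul_bdd ((continuous_fourierSM ν).norm.pow 2).aestronglyMeasurable
      (Eventually.of_forall fun ξ => by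
        rw [Real.norm_of_nonneg (sq_nonneg _)]
        exact pow_le_pow_left₀ (norm_nonneg _) (norm_fourierSM_le ν ξ) 2)
  rw [← ofReal_integral_eq_lintegral_ofReal hint
    (Eventually.of_forall fun ξ => mul_nonneg (heatSymbol_pos s ξ).le (sq_nonneg _)),
    integral_heatSymbol_mul_norm_fourierSM_sq hs]
  calc ENNReal.ofReal (smIntegral ν (heatConv d s ν))
      ≤ ENNReal.ofReal ((eLpNorm (heatConv d s ν) ⊤ volume).toReal * tv ν) :=
        ENNReal.ofReal_le_ofReal ((le_abs_self _).trans (abs_smIntegral_le ν hM))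
    _ = eLpNorm (heatConv d s ν) ⊤ volume * ν.totalVariation Set.univ := by
        rw [ENNReal.ofReal_mul ENNReal.toReal_nonneg, ENNReal.ofReal_toReal hfin, tv,
          ENNReal.ofReal_toReal (measure_ne_top _ _)]
    _ ≤ _ := by
        rw [mul_right_comm]
        gcongr

end Besov

def dyadicAnnulus {E : Type*} [Norm E] (r : ℝ) : Set E := {x | r ≤ ‖x‖ ∧ ‖x‖ < 2 * r}

theorem setOf_le_norm_subset_iUnion_dyadicAnnulus {E : Type*} [Norm E] {R : ℝ} (hR : 0 < R) :
    {x : E | R ≤ ‖x‖} ⊆ ⋃ j : ℕ, dyadicAnnulus (2 ^ j * R) := by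
  intro x hx
  obtain ⟨j, hj, hj'⟩ := exists_nat_pow_near ((one_le_div hR).mpr hx) one_lt_two
  refine Set.mem_iUnion.mpr ⟨j, (le_div_iff₀ hR).mp hj, ?_⟩
  rw [← mul_assoc, ← pow_succ']
  exact (div_lt_iff₀ hR).mp hj'

theorem measurableSet_dyadicAnnulus {E : Type*} [NormedAddCommGroup E] [MeasurableSpace E]
    [OpensMeasurableSpace E] (r : ℝ) : MeasurableSet (dyadicAnnulus (E := E) r) :=
  show MeasurableSet ({x : E | r ≤ ‖x‖} ∩ {x | ‖x‖ < 2 * r}) from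
    (measurableSet_le measurable_const measurable_norm).inter
      (measurableSet_lt measurable_norm measurable_const)

theorem hasSum_two_pow_mul_rpow {e R : ℝ} (he : e < 0) (hR : 0 < R) :
    HasSum (fun j : ℕ => (2 ^ j * R) ^ e) (R ^ e / (1 - 2 ^ e)) := by
  have hq : (2 : ℝ) ^ e < 1 := Real.rpow_lt_one_of_one_lt_of_neg one_lt_two he
  have hterm : (fun j : ℕ => (2 ^ j * R) ^ e) = fun j => R ^ e * (2 ^ e) ^ j := by
    funext j
    rw [Real.mul_rpow (by positivity) hR.le, ← Real.rpow_pow_comm zero_le_two, mul_comm]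
  rw [hterm, div_eq_mul_inv]
  exact (hasSum_geometric_of_lt_one (by positivity) hq).mul_left (R ^ e)

section Annulus

variable {d : ℕ} {α β : ℝ} {ν : SignedMeasure (Ed d)}

theorem lintegral_dyadicAnnulus_le (hα : 0 ≤ α) (hB : besovNorm d β ν ≠ ⊤) {r : ℝ} (hr : 0 < r) :
    ∫⁻ ξ in dyadicAnnulus r, ENNReal.ofReal (‖ξ‖ ^ (-(2 * α)) * ‖fourierSM d ν ξ‖ ^ 2)
      ≤ ENNReal.ofReal (rexp (16 * π ^ 2) * r ^ ((d : ℝ) - β - 2 * α))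
          * ν.totalVariation Set.univ * besovNorm d β ν := by
  set s := (r ^ 2)⁻¹
  have hs : 0 < s := by positivity
  set c := r ^ (-(2 * α)) * rexp (16 * π ^ 2) with hc
  have hpoint : ∀ ξ ∈ dyadicAnnulus r,
      ENNReal.ofReal (‖ξ‖ ^ (-(2 * α)) * ‖fourierSM d ν ξ‖ ^ 2)
        ≤ ENNReal.ofReal c * ENNReal.ofReal (heatSymbol s ξ * ‖fourierSM d ν ξ‖ ^ 2) := by
    rintro ξ ⟨hlow, hhigh⟩
    rw [← ENNReal.ofReal_mul (by positivity)]
    refine ENNReal.ofReal_le_ofReal ?_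
    have hsξ : s * ‖ξ‖ ^ 2 ≤ 4 := by
      rw [inv_mul_le_iff₀ (by positivity)]
      nlinarith [norm_nonneg ξ]
    have hsymb : 1 ≤ rexp (16 * π ^ 2) * heatSymbol s ξ := by
      rw [heatSymbol, ← exp_add]
      exact one_le_exp (by nlinarith [pi_pos])
    have hweight : ‖ξ‖ ^ (-(2 * α)) ≤ r ^ (-(2 * α)) * (rexp (16 * π ^ 2) * heatSymbol s ξ) :=
      (Real.rpow_le_rpow_of_nonpos hr hlow (by linarith)).trans
        (le_mul_of_one_le_right (by positivity) hsymb)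
    calc ‖ξ‖ ^ (-(2 * α)) * ‖fourierSM d ν ξ‖ ^ 2
        ≤ r ^ (-(2 * α)) * (rexp (16 * π ^ 2) * heatSymbol s ξ) * ‖fourierSM d ν ξ‖ ^ 2 := by
          gcongr
      _ = c * (heatSymbol s ξ * ‖fourierSM d ν ξ‖ ^ 2) := by ring
  have hconst : c * s ^ (-(((d : ℝ) - β) / 2)) = rexp (16 * π ^ 2) * r ^ ((d : ℝ) - β - 2 * α) := by
    rw [hc, Real.inv_rpow (by positivity), Real.rpow_neg (x := r ^ 2) (by positivity), inv_inv,
      ← Real.rpow_natCast r 2, ← Real.rpow_mul hr.le, mul_right_comm, ← Real.rpow_add hr, mul_comm]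
    congr 2
    push_cast
    ring
  calc ∫⁻ ξ in dyadicAnnulus r, ENNReal.ofReal (‖ξ‖ ^ (-(2 * α)) * ‖fourierSM d ν ξ‖ ^ 2)
      ≤ ∫⁻ ξ in dyadicAnnulus r,
          ENNReal.ofReal c * ENNReal.ofReal (heatSymbol s ξ * ‖fourierSM d ν ξ‖ ^ 2) :=
        setLIntegral_mono' (measurableSet_dyadicAnnulus r) hpoint
    _ ≤ ∫⁻ ξ, ENNReal.ofReal c * ENNReal.ofReal (heatSymbol s ξ * ‖fourierSM d ν ξ‖ ^ 2) :=
        setLIntegral_le_lintegral _ _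
    _ = ENNReal.ofReal c * ∫⁻ ξ, ENNReal.ofReal (heatSymbol s ξ * ‖fourierSM d ν ξ‖ ^ 2) :=
        lintegral_const_mul' _ _ ENNReal.ofReal_ne_top
    _ ≤ ENNReal.ofReal c * (ENNReal.ofReal (s ^ (-(((d : ℝ) - β) / 2)))
          * ν.totalVariation Set.univ * besovNorm d β ν) := by
        gcongr
        exact lintegral_heatSymbol_mul_norm_fourierSM_sq_le hB hs
    _ = _ := by
        rw [← mul_assoc, ← mul_assoc, ← ENNReal.ofReal_mul (by positivity), hconst]

end Annulus

theorem stmt9_general (d : ℕ) (β α : ℝ) (hβd : β ≤ d)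
    (hα : ((d : ℝ) - β) / 2 < α) :
    ∃ C : ℝ, 0 < C ∧
      ∀ ν : MeasureTheory.SignedMeasure (Ed d), besovNorm d β ν ≠ ⊤ →
      ∀ R : ℝ, 0 < R →
        (∫⁻ ξ in {ξ : Ed d | R ≤ ‖ξ‖},
            ENNReal.ofReal (‖ξ‖ ^ (-(2 * α)) * ‖fourierSM d ν ξ‖ ^ 2))
          ≤ ENNReal.ofReal (C * R ^ ((d : ℝ) - β - 2 * α)) *
              ν.totalVariation Set.univ * besovNorm d β ν := by
  have hα0 : 0 ≤ α := by linarith [show (0 : ℝ) ≤ d - β by linarith]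
  have he : (d : ℝ) - β - 2 * α < 0 := by linarith
  have hq : (2 : ℝ) ^ ((d : ℝ) - β - 2 * α) < 1 := Real.rpow_lt_one_of_one_lt_of_neg one_lt_two he
  refine ⟨rexp (16 * π ^ 2) / (1 - 2 ^ ((d : ℝ) - β - 2 * α)), div_pos (exp_pos _) (by linarith),
    fun ν hB R hR => ?_⟩
  have hsum := (hasSum_two_pow_mul_rpow he hR).mul_left (rexp (16 * π ^ 2))
  calc _ ≤ ∑' j : ℕ, ∫⁻ ξ in dyadicAnnulus (2 ^ j * R),
          ENNReal.ofReal (‖ξ‖ ^ (-(2 * α)) * ‖fourierSM d ν ξ‖ ^ 2) :=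
        (lintegral_mono_set (setOf_le_norm_subset_iUnion_dyadicAnnulus hR)).trans
          (lintegral_iUnion_le _ _)
    _ ≤ ∑' j : ℕ, ENNReal.ofReal (rexp (16 * π ^ 2) * (2 ^ j * R) ^ ((d : ℝ) - β - 2 * α))
          * ν.totalVariation Set.univ * besovNorm d β ν :=
        ENNReal.tsum_le_tsum fun j => lintegral_dyadicAnnulus_le hα0 hB (by positivity)
    _ = _ := by
        rw [ENNReal.tsum_mul_right, ENNReal.tsum_mul_right,
          ← ENNReal.ofReal_tsum_of_nonneg (fun j => by positivity) hsum.summable, hsum.tsum_eq,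
          mul_div_assoc', div_mul_eq_mul_div]

/-- For `β ∈ (0,d]` and `α > (d-β)/2` there is `C = C(d,α,β) > 0` such that every
finite signed measure `μ` with `‖μ‖_B = sup_{t>0} t^{(d-β)/2}‖p_t ∗ μ‖_∞ < ∞` satisfies
`∫_{|ξ|≥R} |ξ|^{-2α} |μ̂(ξ)|² dξ ≤ C R^{d-β-2α} ‖μ‖ ‖μ‖_B` for all `R > 0`. -/
theorem stmt9 (d : ℕ) (hd : 1 ≤ d) (β α : ℝ) (hβ0 : 0 < β) (hβd : β ≤ d)
    (hα : ((d : ℝ) - β) / 2 < α) :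
    ∃ C : ℝ, 0 < C ∧
      ∀ ν : MeasureTheory.SignedMeasure (Ed d), besovNorm d β ν ≠ ⊤ →
      ∀ R : ℝ, 0 < R →
        (∫⁻ ξ in {ξ : Ed d | R ≤ ‖ξ‖},
            ENNReal.ofReal (‖ξ‖ ^ (-(2 * α)) * ‖fourierSM d ν ξ‖ ^ 2))
          ≤ ENNReal.ofReal (C * R ^ ((d : ℝ) - β - 2 * α)) *
              ν.totalVariation Set.univ * besovNorm d β ν :=
  stmt9_general d β α hβd hα
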